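/- arXiv:2006.03399 — 3 statements merged into one kernel-verified Lean document; each statement's English description precedes it below -/
import Mathlib

section
/- In the reduction of Theorem 1, in any feasible sequence with total completion time at most 2(C+D)+1, exactly m of the jobs 1,...,2m are scheduled between job 2m+1 and job 2m+2. -/
/-- completion time of job `j` under permutation `σ` (σ maps positions to jobs). -/
def Cjob {N : ℕ} (p : Fin N → ℕ) (σ : Equiv.Perm (Fin N)) (j : Fin N) : ℕ :=
  ∑ i ∈ Finset.Iic (σ.symm j), p (σ i)

/-- `D = Σ_{j ≤ 2m} p_j = 2mB² + 2B` in the Even-Odd-Partition reduction. -/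
def DEOP (m B : ℕ) : ℕ := 2*m*B^2 + 2*B

/-- `C = Σ_{k=1}^m (m+1-k)(p_{2k-1}+p_{2k}) + (mB²+B)(m+1)` (0-indexed pairs). -/
def CEOP (m B : ℕ) (a : Fin (2*m) → ℕ) : ℕ :=
  (∑ k : Fin m, (m - (k : ℕ)) *
      ((B^2 + a ⟨2*(k : ℕ), by have := k.isLt; omega⟩) +
       (B^2 + a ⟨2*(k : ℕ)+1, by have := k.isLt; omega⟩))) +
    (m*B^2 + B)*(m+1)

/-- processing times of the reduction instance: jobs `0..2m-1` have `p = B² + a_j`,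
job `2m` (the zero-length r-job, "job 2m+1" in the paper) has `p = 0`, and
job `2m+1` (the big r-job, "job 2m+2" in the paper) has `p = C + D + 1`. -/
def pEOP (m B : ℕ) (a : Fin (2*m) → ℕ) : Fin (2*m+2) → ℕ := fun j =>
  if h : (j : ℕ) < 2*m then B^2 + a ⟨j, h⟩
  else if (j : ℕ) = 2*m then 0
  else CEOP m B a + DEOP m B + 1

/-- the zero-length r-job. -/
def zJob (m : ℕ) : Fin (2*m+2) := ⟨2*m, by omega⟩

/-- the big r-job. -/
def bJob (m : ℕ) : Fin (2*m+2) := ⟨2*m+1, by omega⟩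

/-- feasibility: the renting period (from the start of the first r-job to the
completion of the last r-job) is at most `K^r = p_{2m+2} + mB² + B`. -/
def feasEOP (m B : ℕ) (a : Fin (2*m) → ℕ) (σ : Equiv.Perm (Fin (2*m+2))) : Prop :=
  max ((Cjob (pEOP m B a) σ (zJob m) : ℤ)) ((Cjob (pEOP m B a) σ (bJob m) : ℤ)) -
      min ((Cjob (pEOP m B a) σ (zJob m) : ℤ) - pEOP m B a (zJob m))
        ((Cjob (pEOP m B a) σ (bJob m) : ℤ) - pEOP m B a (bJob m)) ≤
    (pEOP m B a (bJob m) : ℤ) + m*B^2 + B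

/-- total completion time. -/
def TCEOP (m B : ℕ) (a : Fin (2*m) → ℕ) (σ : Equiv.Perm (Fin (2*m+2))) : ℕ :=
  ∑ j : Fin (2*m+2), Cjob (pEOP m B a) σ j

/-!
Write `w j = 2m+1 - σ⁻¹ j`. The total completion time is `∑ w j * p j + ∑ p j`, and
`∑ p j = C + 2D + 1`, so the bound on it gives `∑ w j * p j ≤ C`. Since the big r-job
alone has length `C + D + 1`, it must be last. With `s` the position of the zero-length
r-job, the jobs strictly between the two r-jobs are then the `2m - s` ordinary jobs at
positions `s+1, …, 2m`.

Feasibility bounds the total length of these jobs by `mB² + B < (m+1)(B² + 1)`, so at most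
`m` of them lie between the r-jobs. For the other direction, the ordinary jobs fill the
positions `{0, …, 2m} \ {s}`, so their weights add up to `2m² + m + s`. Since
`w (B² + a) + 1 ≥ w (B² + 1) + a`, we get `∑ w j * p j + 2m ≥ (2m² + m + s)(B² + 1) + 2B`,
while `C ≤ 2m(m+1)B² + (3m+1)B`. For `s > m` these two bounds contradict `B ≥ 3m - 1`.
-/

open Finset

section Schedule

variable {N : ℕ} (p : Fin N → ℕ) (σ : Equiv.Perm (Fin N))

theorem sum_Cjob_eq_sum_mul : ∑ j, Cjob p σ j = ∑ j, (N - σ.symm j) * p j := by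
  calc ∑ j, Cjob p σ j = ∑ k, ∑ i ∈ Iic k, p (σ i) := by
        rw [← Equiv.sum_comp σ]; simp only [Cjob, Equiv.symm_apply_apply]
    _ = ∑ i, ∑ _k ∈ Ici i, p (σ i) := sum_comm' fun _ _ => by simp
    _ = ∑ i, (N - i) * p (σ i) := by simp only [sum_const, Fin.card_Ici, smul_eq_mul]
    _ = ∑ j, (N - σ.symm j) * p j := by
        simpa using Equiv.sum_comp σ fun j => (N - (σ.symm j : ℕ)) * p j

theorem Cjob_eq_add_sum_Ioc {i j : Fin N} (hij : σ.symm i ≤ σ.symm j) :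
    Cjob p σ j = Cjob p σ i + ∑ k ∈ Ioc (σ.symm i) (σ.symm j), p (σ k) := by
  rw [Cjob, Cjob, ← Iic_union_Ioc_eq_Iic hij, sum_union (Iic_disjoint_Ioc le_rfl)]

theorem filter_between_eq_map (i j : Fin N) :
    univ.filter (fun x => σ.symm i < σ.symm x ∧ σ.symm x < σ.symm j) =
      (Ioo (σ.symm i) (σ.symm j)).map σ.toEmbedding := by
  ext x
  simp

end Schedule

theorem Fin.sum_univ_two_mul_eq_sum_pairs {M : Type*} [AddCommMonoid M] {m : ℕ}
    (f : Fin (2*m) → M) :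
    ∑ j, f j = ∑ k : Fin m, (f ⟨2*k, by omega⟩ + f ⟨2*k+1, by omega⟩) := by
  rw [← (finProdFinEquiv.trans (finCongr (mul_comm m 2))).sum_comp, Fintype.sum_prod_type]
  refine sum_congr rfl fun k _ => ?_
  simp only [Fin.sum_univ_two]
  congr 1 <;> exact congrArg f (Fin.ext (by simp <;> omega))

theorem Fin.sum_univ_sub_val_mul_two (n : ℕ) :
    (∑ i : Fin (n+1), (n - i : ℕ)) * 2 = n * (n+1) := by
  calc (∑ i : Fin (n+1), (n - i : ℕ)) * 2 = (∑ i ∈ range (n+1), i) * 2 := by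
        rw [Fin.sum_univ_eq_sum_range (fun i => n - i), ← sum_range_reflect]
        congr 1
        exact sum_congr rfl fun i hi => by have := mem_range.1 hi; omega
    _ = n * (n+1) := by rw [sum_range_id_mul_two, Nat.add_sub_cancel, mul_comm]

section Reduction

variable {m B : ℕ} {a : Fin (2*m) → ℕ}

theorem pEOP_castAdd (k : Fin (2*m)) : pEOP m B a (Fin.castAdd 2 k) = B^2 + a k := by
  simp [pEOP]

theorem pEOP_zJob : pEOP m B a (zJob m) = 0 := by
  simp [pEOP, zJob]

theorem pEOP_bJob : pEOP m B a (bJob m) = CEOP m B a + DEOP m B + 1 := by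
  simp [pEOP, bJob]

theorem zJob_ne_bJob : zJob m ≠ bJob m := by
  simp [zJob, bJob, Fin.ext_iff]

theorem val_lt_of_ne_zJob_of_ne_bJob {j : Fin (2*m+2)} (hz : j ≠ zJob m) (hb : j ≠ bJob m) :
    (j : ℕ) < 2*m := by
  simp only [ne_eq, zJob, bJob, Fin.ext_iff] at hz hb
  omega

theorem sum_univ_eq_sum_castAdd_add_zJob_add_bJob (g : Fin (2*m+2) → ℕ) :
    ∑ j, g j = ∑ k : Fin (2*m), g (Fin.castAdd 2 k) + g (zJob m) + g (bJob m) := by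
  rw [Fin.sum_univ_add, Fin.sum_univ_two, add_assoc]
  rfl

theorem sum_pEOP (hsum : ∑ k, a k = 2*B) :
    ∑ j, pEOP m B a j = CEOP m B a + 2 * DEOP m B + 1 := by
  rw [sum_univ_eq_sum_castAdd_add_zJob_add_bJob]
  simp only [pEOP_castAdd, pEOP_zJob, pEOP_bJob, sum_add_distrib, hsum, sum_const, card_univ,
    Fintype.card_fin, smul_eq_mul, DEOP]
  ring

theorem CEOP_le (hsum : ∑ k, a k = 2*B) :
    CEOP m B a ≤ 2*m*(m+1)*B^2 + (3*m+1)*B := by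
  have hpairs := (Fin.sum_univ_two_mul_eq_sum_pairs a).symm.trans hsum
  have hgauss := Fin.sum_univ_sub_val_mul_two m
  rw [Fin.sum_univ_castSucc] at hgauss
  simp only [Fin.val_castSucc, Fin.val_last, Nat.sub_self, add_zero] at hgauss
  calc CEOP m B a
      ≤ ∑ k : Fin m,
            ((m - k) * (2 * B^2) + m * (a ⟨2*k, by omega⟩ + a ⟨2*k+1, by omega⟩))
          + (m*B^2 + B)*(m+1) := by
        refine Nat.add_le_add_right (sum_le_sum fun k _ => ?_) _
        rw [show B^2 + a ⟨2*k, by omega⟩ + (B^2 + a ⟨2*k+1, by omega⟩) =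
          2 * B^2 + (a ⟨2*k, by omega⟩ + a ⟨2*k+1, by omega⟩) by ring, mul_add]
        exact Nat.add_le_add_left (Nat.mul_le_mul_right _ (Nat.sub_le _ _)) _
    _ = 2*m*(m+1)*B^2 + (3*m+1)*B := by
        rw [sum_add_distrib, ← sum_mul, ← mul_sum, hpairs]
        nlinarith [hgauss]

variable (σ : Equiv.Perm (Fin (2*m+2)))

theorem sum_weight_mul_pEOP_le (hsum : ∑ k, a k = 2*B)
    (hTC : TCEOP m B a σ ≤ 2*(CEOP m B a + DEOP m B) + 1) :
    ∑ j, (2*m+1 - σ.symm j) * pEOP m B a j ≤ CEOP m B a := by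
  have hTC_eq : TCEOP m B a σ =
      ∑ j, (2*m+1 - σ.symm j) * pEOP m B a j + ∑ j, pEOP m B a j := by
    rw [TCEOP, sum_Cjob_eq_sum_mul, ← sum_add_distrib]
    refine sum_congr rfl fun j _ => ?_
    have := (σ.symm j).isLt
    rw [show 2*m+2 - (σ.symm j : ℕ) = (2*m+1 - σ.symm j) + 1 by omega, add_one_mul]
  rw [hTC_eq, sum_pEOP hsum] at hTC
  omega

theorem symm_bJob_eq_last (h : ∑ j, (2*m+1 - σ.symm j) * pEOP m B a j ≤ CEOP m B a) :
    σ.symm (bJob m) = Fin.last _ := by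
  by_contra hne
  have hpos : 1 ≤ 2*m+1 - (σ.symm (bJob m) : ℕ) := by
    have := Fin.val_lt_last hne
    omega
  have := (Nat.le_mul_of_pos_left _ hpos).trans <|
    single_le_sum (f := fun j => (2*m+1 - σ.symm j) * pEOP m B a j) (by simp) (mem_univ (bJob m))
  rw [pEOP_bJob] at this
  omega

theorem val_apply_lt_of_mem_Ioo_zJob_bJob {k : Fin (2*m+2)}
    (hk : k ∈ Ioo (σ.symm (zJob m)) (σ.symm (bJob m))) : (σ k : ℕ) < 2*m := by
  rw [mem_Ioo] at hk
  refine val_lt_of_ne_zJob_of_ne_bJob (fun h => ?_) (fun h => ?_) <;>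
    rw [← h, Equiv.symm_apply_apply] at hk
  exacts [lt_irrefl _ hk.1, lt_irrefl _ hk.2]

theorem filter_between_zJob_bJob_eq_map :
    univ.filter (fun j : Fin (2*m+2) =>
        (j : ℕ) < 2*m ∧ σ.symm (zJob m) < σ.symm j ∧ σ.symm j < σ.symm (bJob m)) =
      (Ioo (σ.symm (zJob m)) (σ.symm (bJob m))).map σ.toEmbedding := by
  rw [← filter_between_eq_map σ]
  ext j
  rw [mem_filter, mem_filter]
  refine and_congr_right fun _ => and_iff_right_of_imp fun hj => ?_
  simpa using val_apply_lt_of_mem_Ioo_zJob_bJob σ (k := σ.symm j) (mem_Ioo.2 hj)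

theorem card_mul_le_sum_between (ha : ∀ k, 0 < a k) :
    #(Ioo (σ.symm (zJob m)) (σ.symm (bJob m))) * (B^2 + 1) ≤
      ∑ k ∈ Ioo (σ.symm (zJob m)) (σ.symm (bJob m)), pEOP m B a (σ k) := by
  rw [← smul_eq_mul]
  refine card_nsmul_le_sum _ _ _ fun k hk => ?_
  have hlt := val_apply_lt_of_mem_Ioo_zJob_bJob σ hk
  rw [pEOP, dif_pos hlt]
  exact Nat.add_le_add_left (ha _) _

theorem sum_between_le (hfeas : feasEOP m B a σ) (hzb : σ.symm (zJob m) < σ.symm (bJob m)) :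
    ∑ k ∈ Ioo (σ.symm (zJob m)) (σ.symm (bJob m)), pEOP m B a (σ k) ≤ m*B^2 + B := by
  have hsplit := Cjob_eq_add_sum_Ioc (pEOP m B a) σ hzb.le
  rw [← Ioo_insert_right hzb, sum_insert right_notMem_Ioo, Equiv.apply_symm_apply] at hsplit
  have := (sub_le_sub (le_max_right _ _) (min_le_left _ _)).trans hfeas
  rw [hsplit, pEOP_zJob] at this
  zify
  push_cast at this
  linarith

theorem le_sum_weight_mul_pEOP (ha : ∀ k, 0 < a k) (hsum : ∑ k, a k = 2*B)
    (hlast : σ.symm (bJob m) = Fin.last _) :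
    (2*m*m + m + σ.symm (zJob m)) * (B^2 + 1) + 2*B ≤
      ∑ j, (2*m+1 - σ.symm j) * pEOP m B a j + 2*m := by
  set w : Fin (2*m+2) → ℕ := fun j => 2*m+1 - σ.symm j
  change _ ≤ ∑ j, w j * pEOP m B a j + 2*m
  have hw_sum : ∑ k : Fin (2*m), w (Fin.castAdd 2 k) = 2*m*m + m + σ.symm (zJob m) := by
    have hgauss := Fin.sum_univ_sub_val_mul_two (2*m+1)
    rw [← Equiv.sum_comp σ.symm, sum_univ_eq_sum_castAdd_add_zJob_add_bJob, hlast,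
      Fin.val_last, Nat.sub_self, add_zero] at hgauss
    have hs : 2*m+1 - (σ.symm (zJob m) : ℕ) + σ.symm (zJob m) = 2*m+1 :=
      Nat.sub_add_cancel (Nat.le_of_lt_succ (σ.symm (zJob m)).isLt)
    linarith
  have hw_pos (k : Fin (2*m)) : 1 ≤ w (Fin.castAdd 2 k) := by
    have hne : σ.symm (Fin.castAdd 2 k) ≠ Fin.last _ := by
      rw [← hlast, Ne, σ.symm.apply_eq_iff_eq, Fin.ext_iff]
      simp only [Fin.val_castAdd, bJob]
      omega
    have := Fin.val_lt_last hne
    simp only [w]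
    omega
  have hterm (k : Fin (2*m)) :
      w (Fin.castAdd 2 k) * (B^2 + 1) + a k ≤ w (Fin.castAdd 2 k) * (B^2 + a k) + 1 := by
    nlinarith [hw_pos k, ha k]
  have hw_bJob : w (bJob m) = 0 := by simp [w, hlast]
  have hsum_terms := sum_le_sum fun k (_ : k ∈ univ) => hterm k
  rw [sum_univ_eq_sum_castAdd_add_zJob_add_bJob, pEOP_zJob, hw_bJob]
  simp only [sum_add_distrib, ← sum_mul, hsum, hw_sum, pEOP_castAdd, sum_const, card_univ,
    Fintype.card_fin, smul_eq_mul, mul_zero, zero_mul, add_zero, mul_one] at hsum_terms ⊢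
  exact hsum_terms

theorem card_Ioo_zJob_bJob_le (ha : ∀ k, 0 < a k) (hfeas : feasEOP m B a σ)
    (hzb : σ.symm (zJob m) < σ.symm (bJob m)) :
    #(Ioo (σ.symm (zJob m)) (σ.symm (bJob m))) ≤ m := by
  have h := (card_mul_le_sum_between σ ha).trans (sum_between_le σ hfeas hzb)
  by_contra! hc
  nlinarith [Nat.mul_le_mul_right (B^2 + 1) hc, Nat.le_self_pow two_ne_zero B]

theorem val_symm_zJob_le (ha : ∀ k, 0 < a k) (hsum : ∑ k, a k = 2*B) (hB : 2*m*(m+1) ≤ B + 2)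
    (hweight : ∑ j, (2*m+1 - σ.symm j) * pEOP m B a j ≤ CEOP m B a)
    (hlast : σ.symm (bJob m) = Fin.last _) :
    (σ.symm (zJob m) : ℕ) ≤ m := by
  have h := (le_sum_weight_mul_pEOP σ ha hsum hlast).trans
    (Nat.add_le_add_right (hweight.trans (CEOP_le hsum)) _)
  have hm : 3*m ≤ B + 1 := by nlinarith
  by_contra! hs
  nlinarith [Nat.mul_le_mul_right (B^2 + 1) hs, Nat.mul_le_mul_right B hm]

end Reduction

theorem stmt5_general (m B : ℕ) (a : Fin (2*m) → ℕ) (ha : ∀ k, 0 < a k)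
    (hsum : ∑ k, a k = 2*B) (hB : 2*m*(m+1) ≤ B + 2)
    (σ : Equiv.Perm (Fin (2*m+2)))
    (hfeas : feasEOP m B a σ)
    (hTC : TCEOP m B a σ ≤ 2*(CEOP m B a + DEOP m B) + 1) :
    (Finset.univ.filter fun j : Fin (2*m+2) =>
        (j : ℕ) < 2*m ∧ σ.symm (zJob m) < σ.symm j ∧ σ.symm j < σ.symm (bJob m)).card
      = m := by
  have hweight := sum_weight_mul_pEOP_le σ hsum hTC
  have hlast := symm_bJob_eq_last σ hweight
  have hzb : σ.symm (zJob m) < σ.symm (bJob m) :=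
    lt_of_le_of_ne (hlast ▸ Fin.le_last _) (σ.symm.injective.ne zJob_ne_bJob)
  have hcard : #(Ioo (σ.symm (zJob m)) (σ.symm (bJob m))) + σ.symm (zJob m) = 2*m := by
    rw [Fin.card_Ioo, hlast, Fin.val_last]
    omega
  rw [filter_between_zJob_bJob_eq_map, card_map]
  have hcard_le := card_Ioo_zJob_bJob_le σ ha hfeas hzb
  have hpos_le := val_symm_zJob_le σ ha hsum hB hweight hlast
  omega

/-- in the Even-Odd-Partition reduction, any feasible sequence with
total completion time at most `2(C+D)+1` schedules exactly `m` of the jobs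
`1,…,2m` strictly between the zero-length r-job and the big r-job. -/
theorem stmt5 (m B : ℕ) (hm : 0 < m) (a : Fin (2*m) → ℕ) (ha : ∀ k, 0 < a k)
    (hmono : StrictMono a) (hsum : ∑ k, a k = 2*B) (hB : 2*m*(m+1) ≤ B + 2)
    (σ : Equiv.Perm (Fin (2*m+2)))
    (hfeas : feasEOP m B a σ)
    (hTC : TCEOP m B a σ ≤ 2*(CEOP m B a + DEOP m B) + 1) :
    (Finset.univ.filter fun j : Fin (2*m+2) =>
        (j : ℕ) < 2*m ∧ σ.symm (zJob m) < σ.symm j ∧ σ.symm j < σ.symm (bJob m)).card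
      = m :=
  stmt5_general m B a ha hsum hB σ hfeas hTC
end

section
/- In the Partition reduction for 1|er|max L_j, any feasible sequence with maximum lateness at most 0 must schedule job m+2 in the last position and start job m+1 exactly at time B. -/
/-- processing times: jobs `0..m-1` have `p = a_j`; the two r-jobs `m` and `m+1`
have `p = 1`. -/
def pPar (m : ℕ) (a : Fin m → ℕ) : Fin (m+2) → ℕ := fun j =>
  if h : (j : ℕ) < m then a ⟨j, h⟩ else 1

/-- due dates: `d_j = 2B+1` for ordinary jobs, `d_{m+1} = B+1` (job `m`),
`d_{m+2} = 2B+2` (job `m+1`). -/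
def dPar (m B : ℕ) : Fin (m+2) → ℤ := fun j =>
  if (j : ℕ) < m then 2*B+1 else if (j : ℕ) = m then B+1 else 2*B+2

/-- the r-job with due date `B+1`. -/
def zP (m : ℕ) : Fin (m+2) := ⟨m, by omega⟩

/-- the r-job with due date `2B+2`. -/
def bP (m : ℕ) : Fin (m+2) := ⟨m+1, by omega⟩

/-- feasibility: renting period (start of first r-job to completion of last
r-job) at most `K^r = B+2`. -/
def feasPar (m B : ℕ) (a : Fin m → ℕ) (σ : Equiv.Perm (Fin (m+2))) : Prop :=
  max ((Cjob (pPar m a) σ (zP m) : ℤ)) ((Cjob (pPar m a) σ (bP m) : ℤ)) -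
      min ((Cjob (pPar m a) σ (zP m) : ℤ) - pPar m a (zP m))
        ((Cjob (pPar m a) σ (bP m) : ℤ) - pPar m a (bP m)) ≤
    (B : ℤ) + 2

theorem Cjob_last {n : ℕ} (p : Fin (n + 1) → ℕ) (σ : Equiv.Perm (Fin (n + 1))) :
    Cjob p σ (σ (Fin.last n)) = ∑ j, p j := by
  rw [Cjob, Equiv.symm_apply_apply, ← Fin.top_eq_last, Finset.Iic_top, Equiv.sum_comp σ p]

theorem pPar_zP (m : ℕ) (a : Fin m → ℕ) : pPar m a (zP m) = 1 := by
  simp [pPar, zP]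

theorem pPar_bP (m : ℕ) (a : Fin m → ℕ) : pPar m a (bP m) = 1 := by
  simp [pPar, bP]

theorem dPar_zP (m B : ℕ) : dPar m B (zP m) = B + 1 := by
  simp [dPar, zP]

theorem sum_pPar (m : ℕ) (a : Fin m → ℕ) : ∑ j, pPar m a j = ∑ i, a i + 2 := by
  have hlast : pPar m a (Fin.last (m + 1)) = 1 := pPar_bP m a
  have hpen : pPar m a (Fin.last m).castSucc = 1 := pPar_zP m a
  have hjob (i : Fin m) : pPar m a i.castSucc.castSucc = a i := by simp [pPar]
  simp only [Fin.sum_univ_castSucc, hlast, hpen, hjob]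

theorem eq_bP_of_dPar_ge (m B : ℕ) (j : Fin (m + 2)) (hj : 2 * (B : ℤ) + 2 ≤ dPar m B j) :
    j = bP m := by
  unfold dPar at hj
  split_ifs at hj with h₁ h₂
  · omega
  · omega
  · exact Fin.ext (by simp only [bP]; omega)

/-- in the Partition reduction, any feasible sequence with maximum
lateness at most `0` schedules job `m+2` last and starts job `m+1` exactly at
time `B`. -/
theorem stmt8 (m B : ℕ) (a : Fin m → ℕ) (hsum : ∑ i, a i = 2*B)
    (σ : Equiv.Perm (Fin (m+2)))
    (hfeas : feasPar m B a σ)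
    (hL : ∀ j, (Cjob (pPar m a) σ j : ℤ) - dPar m B j ≤ 0) :
    σ ⟨m+1, by omega⟩ = bP m ∧
      (Cjob (pPar m a) σ (zP m) : ℤ) - pPar m a (zP m) = B := by
  have hClast : Cjob (pPar m a) σ (σ (Fin.last (m + 1))) = 2 * B + 2 := by
    rw [Cjob_last, sum_pPar, hsum]
  have hlast : σ (Fin.last (m + 1)) = bP m := by
    apply eq_bP_of_dPar_ge m B
    have := hL (σ (Fin.last (m + 1)))
    rw [hClast] at this
    push_cast at this
    omega
  have hCb : Cjob (pPar m a) σ (bP m) = 2 * B + 2 := hlast ▸ hClast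
  have hLz := hL (zP m)
  rw [dPar_zP] at hLz
  rw [feasPar, hCb, pPar_zP, pPar_bP] at hfeas
  refine ⟨hlast, ?_⟩
  rw [pPar_zP]
  push_cast at hfeas ⊢
  omega
end

section
/- For all X ⊆ H and κ ∈ J[α,β], the maximum of C_j^{σ_{X,∅}} − d_j over j ∈ J[α,κ−1] equals the maximum over j ∈ J[α,κ−1] \ X; i.e., jobs moved into the early block X never attain the maximum lateness strictly among J[α,κ−1] beyond what job α attains. -/
/-!
A job `j ∈ X` is scheduled in the early block `X`, before every job of the later blocks, in
particular before `α ∉ X`; so `C_j ≤ C_α`, while `d_α ≤ d_j` because `α ≤ j`. Hence the lateness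
of `j` is dominated by that of `α ∈ J[α,κ-1] \ X`, and removing `X` does not change the maximum.
-/

variable {n : ℕ}

/-- completion time of job `j` in the schedule given by the list `l`:
total processing time of the prefix of `l` up to and including `j`. -/
def comp (p : Fin n → ℕ) (l : List (Fin n)) (j : Fin n) : ℕ :=
  ((l.takeWhile fun k => decide (k ≠ j)).map p).sum + p j

/-- the elements of a finset listed in increasing index order. -/
def sortF (s : Finset (Fin n)) : List (Fin n) := s.sort (· ≤ ·)

/-- a schedule is a permutation of all of the jobs. -/
def IsSchedule (l : List (Fin n)) : Prop := l.Perm (List.finRange n)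

/-- the renting period of schedule `l`: from the start of the first r-job to
the completion of the last r-job. -/
def rent (p : Fin n → ℕ) (Jr : Finset (Fin n)) (hJr : Jr.Nonempty)
    (l : List (Fin n)) : ℤ :=
  (Jr.sup' hJr fun j => (comp p l j : ℤ)) -
    (Jr.inf' hJr fun j => (comp p l j : ℤ) - p j)

/-- `H`: the o-jobs with index between `α = min J^r` and `β = max J^r`. -/
def Hset (Jr : Finset (Fin n)) (hJr : Jr.Nonempty) : Finset (Fin n) :=
  (Finset.Icc (Jr.min' hJr) (Jr.max' hJr)) \ Jr

/-- the five-block sequence `σ_{X,Y}`: blocks `J[1,α-1]`, `X`,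
`J[α,β] \ (X ∪ Y)`, `Y`, `J[β+1,n]`, each internally in increasing index
(WSPT resp. EDD) order. -/
def fiveBlock (Jr : Finset (Fin n)) (hJr : Jr.Nonempty)
    (X Y : Finset (Fin n)) : List (Fin n) :=
  sortF (Finset.Iio (Jr.min' hJr)) ++ sortF X ++
    sortF ((Finset.Icc (Jr.min' hJr) (Jr.max' hJr)) \ (X ∪ Y)) ++
    sortF Y ++ sortF (Finset.Ioi (Jr.max' hJr))

theorem Finset.sup'_sdiff_eq_of_forall_le {ι α : Type*} [DecidableEq ι] [SemilatticeSup α]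
    {s t : Finset ι} (f : ι → α) (hs : s.Nonempty) (hst : (s \ t).Nonempty)
    (hdom : ∀ j ∈ s, j ∈ t → ∃ i ∈ s \ t, f j ≤ f i) :
    s.sup' hs f = (s \ t).sup' hst f := by
  refine le_antisymm (Finset.sup'_le _ _ fun j hj => ?_) (Finset.sup'_mono f sdiff_subset hst)
  by_cases hjt : j ∈ t
  · obtain ⟨i, hi, hji⟩ := hdom j hj hjt
    exact le_trans hji (Finset.le_sup' f hi)
  · exact Finset.le_sup' f (Finset.mem_sdiff.mpr ⟨hj, hjt⟩)

section comp

variable (p : Fin n → ℕ)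

theorem comp_cons_of_ne {a j : Fin n} (h : a ≠ j) (l : List (Fin n)) :
    comp p (a :: l) j = p a + comp p l j := by
  simp [comp, h, Nat.add_assoc]

theorem comp_le_sum_of_mem {j : Fin n} {l : List (Fin n)} (hj : j ∈ l) :
    comp p l j ≤ (l.map p).sum := by
  induction l with
  | nil => simp at hj
  | cons a l ih =>
    by_cases haj : a = j
    · subst haj
      simp [comp]
    · have hjl : j ∈ l := (List.mem_cons.mp hj).resolve_left (Ne.symm haj)
      rw [comp_cons_of_ne p haj, List.map_cons, List.sum_cons]
      exact Nat.add_le_add_left (ih hjl) _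

theorem comp_append_of_mem {j : Fin n} {l₁ : List (Fin n)} (hj : j ∈ l₁) (l₂ : List (Fin n)) :
    comp p (l₁ ++ l₂) j = comp p l₁ j := by
  induction l₁ with
  | nil => simp at hj
  | cons a l₁ ih =>
    by_cases haj : a = j
    · subst haj
      simp [comp]
    · have hjl : j ∈ l₁ := (List.mem_cons.mp hj).resolve_left (Ne.symm haj)
      rw [List.cons_append, comp_cons_of_ne p haj, comp_cons_of_ne p haj, ih hjl]

theorem comp_append_of_notMem {a : Fin n} {l₁ : List (Fin n)} (ha : a ∉ l₁)
    (l₂ : List (Fin n)) : comp p (l₁ ++ l₂) a = (l₁.map p).sum + comp p l₂ a := by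
  induction l₁ with
  | nil => simp
  | cons b l₁ ih =>
    have hba : b ≠ a := fun h => ha (h ▸ List.mem_cons_self)
    rw [List.cons_append, comp_cons_of_ne p hba, ih (fun h => ha (List.mem_cons_of_mem b h)),
      List.map_cons, List.sum_cons, Nat.add_assoc]

theorem comp_le_comp_of_mem_of_notMem {j a : Fin n} {l₁ : List (Fin n)} (hj : j ∈ l₁)
    (ha : a ∉ l₁) (l₂ : List (Fin n)) : comp p (l₁ ++ l₂) j ≤ comp p (l₁ ++ l₂) a := by
  rw [comp_append_of_mem p hj, comp_append_of_notMem p ha]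
  exact le_add_right (comp_le_sum_of_mem p hj)

end comp

theorem comp_fiveBlock_le_of_mem_of_notMem {p : Fin n → ℕ} {Jr : Finset (Fin n)}
    (hJr : Jr.Nonempty) {X : Finset (Fin n)} (Y : Finset (Fin n)) {j a : Fin n} (hj : j ∈ X)
    (haX : a ∉ X) (hαa : Jr.min' hJr ≤ a) :
    comp p (fiveBlock Jr hJr X Y) j ≤ comp p (fiveBlock Jr hJr X Y) a := by
  simp only [fiveBlock, List.append_assoc]
  rw [← List.append_assoc]
  apply comp_le_comp_of_mem_of_notMem
  · simp [sortF, hj]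
  · simp only [sortF, List.mem_append, Finset.mem_sort, Finset.mem_Iio, not_or]
    exact ⟨not_lt.mpr hαa, haX⟩

theorem stmt12_general {n : ℕ} (p : Fin n → ℕ)
    (d : Fin n → ℤ) (hd : Monotone d)
    (Jr : Finset (Fin n)) (hJr : Jr.Nonempty)
    (X : Finset (Fin n)) (hX : X ⊆ Hset Jr hJr)
    (κ : Fin n)
    (h1 : (Finset.Ico (Jr.min' hJr) κ).Nonempty)
    (h2 : ((Finset.Ico (Jr.min' hJr) κ) \ X).Nonempty) :
    (Finset.Ico (Jr.min' hJr) κ).sup' h1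
        (fun j => (comp p (fiveBlock Jr hJr X ∅) j : ℤ) - d j) =
      ((Finset.Ico (Jr.min' hJr) κ) \ X).sup' h2
        (fun j => (comp p (fiveBlock Jr hJr X ∅) j : ℤ) - d j) := by
  set α := Jr.min' hJr
  have hαX : α ∉ X := fun h => (Finset.mem_sdiff.mp (hX h)).2 (Jr.min'_mem hJr)
  have hακ : α < κ := Finset.nonempty_Ico.mp h1
  refine Finset.sup'_sdiff_eq_of_forall_le _ h1 h2 fun j hj hjX => ⟨α, ?_, ?_⟩
  · exact Finset.mem_sdiff.mpr ⟨Finset.mem_Ico.mpr ⟨le_rfl, hακ⟩, hαX⟩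
  · have hC : comp p (fiveBlock Jr hJr X ∅) j ≤ comp p (fiveBlock Jr hJr X ∅) α :=
      comp_fiveBlock_le_of_mem_of_notMem hJr ∅ hjX hαX le_rfl
    have hdα : d α ≤ d j := hd (Finset.mem_Ico.mp hj).1
    omega

/-- for all `X ⊆ H` and `κ ∈ J[α,β]`, the maximum of
`C_j^{σ_{X,∅}} - d_j` over `j ∈ J[α,κ-1]` equals the maximum over
`j ∈ J[α,κ-1] \ X`. -/
theorem stmt12 {n : ℕ} (p : Fin n → ℕ) (hp : ∀ j, 0 < p j)
    (d : Fin n → ℤ) (hd : Monotone d)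
    (Jr : Finset (Fin n)) (hJr : Jr.Nonempty)
    (X : Finset (Fin n)) (hX : X ⊆ Hset Jr hJr)
    (κ : Fin n) (hκβ : κ ≤ Jr.max' hJr)
    (h1 : (Finset.Ico (Jr.min' hJr) κ).Nonempty)
    (h2 : ((Finset.Ico (Jr.min' hJr) κ) \ X).Nonempty) :
    (Finset.Ico (Jr.min' hJr) κ).sup' h1
        (fun j => (comp p (fiveBlock Jr hJr X ∅) j : ℤ) - d j) =
      ((Finset.Ico (Jr.min' hJr) κ) \ X).sup' h2
        (fun j => (comp p (fiveBlock Jr hJr X ∅) j : ℤ) - d j) :=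
  stmt12_general p d hd Jr hJr X hX κ h1 h2
end
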